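/- arXiv:1409.2000 — 7 statements merged into one kernel-verified Lean document; each statement's English description precedes it below -/
import Mathlib

section
/- For every integer $n \geq 2$ and all positive reals $x_1, \dots, x_n$, one has $\log\left(\frac{1}{n}\sum_{i=1}^n x_i\right) \geq \frac{1}{n}\sum_{i=1}^n \log x_i + \frac{1}{2n(n-1)} \sum_{i \neq j} \left(\frac{x_i - x_j}{x_i + x_j}\right)^2$. -/
/-! With `t = (a - b) / (a + b)` one has `1 - t ^ 2 = a * b / ((a + b) / 2) ^ 2`, so
`log ((a + b) / 2) - (log a + log b) / 2 = -log (1 - t ^ 2) / 2 ≥ t ^ 2 / 2`.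
Averaging this two-point bound over the `n (n - 1)` ordered pairs `i ≠ j` and applying Jensen's
inequality to the midpoints `(x i + x j) / 2`, whose mean is the mean of the `x i`, gives the
claim. -/

open Finset

namespace Real

theorem avg_log_add_half_sq_le_log_avg {a b : ℝ} (ha : 0 < a) (hb : 0 < b) :
    (log a + log b) / 2 + ((a - b) / (a + b)) ^ 2 / 2 ≤ log ((a + b) / 2) := by
  set t := (a - b) / (a + b)
  have h_one_sub : 1 - t ^ 2 = a * b / ((a + b) / 2) ^ 2 := by
    simp only [t]; field_simp; ring
  have h_log : log (1 - t ^ 2) = log a + log b - 2 * log ((a + b) / 2) := by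
    rw [h_one_sub, log_div (by positivity) (by positivity), log_mul ha.ne' hb.ne', log_pow]
    push_cast; ring
  have h_pos : 0 < 1 - t ^ 2 := h_one_sub ▸ by positivity
  linarith [log_le_sub_one_of_pos h_pos]

end Real

theorem Finset.sum_offDiag_add {ι R : Type*} [DecidableEq ι] [CommRing R] (s : Finset ι)
    (f : ι → R) :
    ∑ p ∈ s.offDiag, (f p.1 + f p.2) = 2 * (#s - 1) * ∑ i ∈ s, f i := by
  have h := sum_union (disjoint_diag_offDiag s) (f := fun p => f p.1 + f p.2)
  rw [diag_union_offDiag, sum_product] at h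
  simp only [sum_diag, sum_add_distrib, sum_const, nsmul_eq_mul, ← mul_sum] at h
  rw [sum_add_distrib]
  linear_combination -h

theorem Finset.sum_offDiag_eq_sum_sum_ite {ι M : Type*} [DecidableEq ι] [AddCommMonoid M]
    (s : Finset ι) (g : ι → ι → M) :
    ∑ p ∈ s.offDiag, g p.1 p.2 = ∑ i ∈ s, ∑ j ∈ s, if i ≠ j then g i j else 0 := by
  rw [← sum_product' (f := fun i j => if i ≠ j then g i j else 0), ← sum_filter]
  congr 1
  ext p
  simp [and_assoc]

theorem ConcaveOn.sum_map_div_card_le_map_sum_div_card {ι 𝕜 : Type*} [Field 𝕜] [LinearOrder 𝕜]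
    [IsStrictOrderedRing 𝕜] {s : Set 𝕜} {f : 𝕜 → 𝕜} (hf : ConcaveOn 𝕜 s f) {t : Finset ι}
    (ht : t.Nonempty) {p : ι → 𝕜} (hp : ∀ i ∈ t, p i ∈ s) :
    (∑ i ∈ t, f (p i)) / #t ≤ f ((∑ i ∈ t, p i) / #t) := by
  simpa [centerMass, div_eq_inv_mul] using
    hf.le_map_centerMass (w := fun _ => 1) (fun _ _ => zero_le_one) (by simpa using ht) hp

theorem Real.log_jensen_second_order_finset {ι : Type*} [DecidableEq ι] {s : Finset ι}
    (hs : 2 ≤ #s) {x : ι → ℝ} (hx : ∀ i ∈ s, 0 < x i) :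
    (∑ i ∈ s, log (x i)) / #s + 1 / (2 * #s * (#s - 1)) *
        ∑ i ∈ s, ∑ j ∈ s, (if i ≠ j then ((x i - x j) / (x i + x j)) ^ 2 else 0) ≤
      log ((∑ i ∈ s, x i) / #s) := by
  have hs' : (2 : ℝ) ≤ #s := by exact_mod_cast hs
  have h_card : (#s.offDiag : ℝ) = #s * (#s - 1) := by
    rw [offDiag_card, Nat.cast_sub (Nat.le_mul_self _)]; push_cast; ring
  have h_card_pos : (0 : ℝ) < #s.offDiag := by rw [h_card]; nlinarith
  have hs₀ : (#s : ℝ) ≠ 0 := by positivity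
  have hs₁ : (#s : ℝ) - 1 ≠ 0 := by linarith
  calc (∑ i ∈ s, log (x i)) / #s + 1 / (2 * #s * (#s - 1)) *
          ∑ i ∈ s, ∑ j ∈ s, (if i ≠ j then ((x i - x j) / (x i + x j)) ^ 2 else 0)
      = (∑ p ∈ s.offDiag, ((log (x p.1) + log (x p.2)) / 2 +
          ((x p.1 - x p.2) / (x p.1 + x p.2)) ^ 2 / 2)) / #s.offDiag := by
        rw [sum_add_distrib, ← sum_div, ← sum_div, sum_offDiag_add _ (fun i => log (x i)),
          sum_offDiag_eq_sum_sum_ite _ (fun i j => ((x i - x j) / (x i + x j)) ^ 2), h_card]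
        field_simp
    _ ≤ (∑ p ∈ s.offDiag, log ((x p.1 + x p.2) / 2)) / #s.offDiag := by
        gcongr with p hp
        rw [mem_offDiag] at hp
        exact avg_log_add_half_sq_le_log_avg (hx _ hp.1) (hx _ hp.2.1)
    _ ≤ log ((∑ p ∈ s.offDiag, (x p.1 + x p.2) / 2) / #s.offDiag) := by
        refine strictConcaveOn_log_Ioi.concaveOn.sum_map_div_card_le_map_sum_div_card
          (card_pos.mp (by exact_mod_cast h_card_pos)) fun p hp => ?_
        rw [mem_offDiag] at hp
        exact Set.mem_Ioi.mpr (by linarith [hx _ hp.1, hx _ hp.2.1])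
    _ = log ((∑ i ∈ s, x i) / #s) := by
        rw [← sum_div, sum_offDiag_add, h_card]
        field_simp

/-- Second-order refinement of Jensen's inequality for the logarithm. -/
theorem log_jensen_second_order (n : ℕ) (hn : 2 ≤ n) (x : Fin n → ℝ)
    (hx : ∀ i, 0 < x i) :
    Real.log ((∑ i, x i) / n) ≥
      (∑ i, Real.log (x i)) / n +
        (1 / (2 * n * (n - 1))) *
          ∑ i, ∑ j, (if i ≠ j then ((x i - x j) / (x i + x j)) ^ 2 else 0) := by
  simpa using Real.log_jensen_second_order_finset (s := univ) (by simpa using hn) (fun i _ => hx i)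
end

section
/- Let $X$ and $Y$ be non-negative random variables and define the discrepancy $\kappa(X) = \mathbb{E}\left|\frac{X - X'}{X + X'}\right|$ where $X'$ is an independent copy of $X$ (with the convention $0/0 = 0$). Then $\kappa(XY) \leq 6\kappa(X) + 6\kappa(Y)$, where in the definition of $\kappa(XY)$ the pair $(X', Y')$ is an independent copy of $(X, Y)$. -/
/-!
With `u = (x - x')/(x + x')` and `v = (y - y')/(y + y')` one has
`(xy - x'y')/(xy + x'y') = (u + v)/(1 + uv)`, the relativistic addition of velocities
`u, v ∈ [-1, 1]`, and `|u + v| ≤ (|u| + |v|)(1 + uv)` there. Integrating this pointwise bound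
against the law of two independent copies of `(X, Y)` gives even `κ(XY) ≤ κ(X) + κ(Y)`.
-/

open MeasureTheory

/-- The discrepancy `κ` of (the law of) a nonnegative random variable:
`κ(X) = 𝔼|(X - X')/(X + X')|` with `X'` an independent copy of `X`
(convention `0/0 = 0`, which is the Lean convention for division). -/
noncomputable def kappa (μ : Measure ℝ) : ℝ :=
  ∫ p : ℝ × ℝ, |(p.1 - p.2) / (p.1 + p.2)| ∂(μ.prod μ)

lemma abs_sub_div_add_le_one {a b : ℝ} (ha : 0 ≤ a) (hb : 0 ≤ b) :
    |(a - b) / (a + b)| ≤ 1 := by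
  rw [abs_div, abs_of_nonneg (add_nonneg ha hb)]
  exact div_le_one_of_le₀ (abs_sub_le_iff.2 ⟨by linarith, by linarith⟩) (add_nonneg ha hb)

lemma mul_sub_mul_div_mul_add_mul {x x' y y' : ℝ} (hx : x + x' ≠ 0) (hy : y + y' ≠ 0) :
    (x * y - x' * y') / (x * y + x' * y') =
      ((x - x') / (x + x') + (y - y') / (y + y')) /
        (1 + (x - x') / (x + x') * ((y - y') / (y + y'))) := by
  rw [div_add_div _ _ hx hy, div_mul_div_comm, one_add_div (mul_ne_zero hx hy),
    div_div_div_cancel_right₀ (mul_ne_zero hx hy), ← mul_div_mul_left _ _ (two_ne_zero' ℝ)]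
  congr 1 <;> ring

lemma add_le_abs_add_abs_mul_one_add_mul {u v : ℝ} (hu : |u| ≤ 1) (hv : |v| ≤ 1) :
    u + v ≤ (|u| + |v|) * (1 + u * v) := by
  rw [abs_le] at hu hv
  rcases le_total 0 u with hu0 | hu0 <;> rcases le_total 0 v with hv0 | hv0
  · rw [abs_of_nonneg hu0, abs_of_nonneg hv0]
    nlinarith [mul_nonneg (mul_nonneg hu0 hv0) (add_nonneg hu0 hv0)]
  · rw [abs_of_nonneg hu0, abs_of_nonpos hv0]
    nlinarith [mul_nonneg (mul_nonneg hu0 (neg_nonneg.2 hv0)) (by linarith : 0 ≤ 1 - u),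
      mul_nonneg (neg_nonneg.2 hv0) (by nlinarith : 0 ≤ 1 - u * u)]
  · rw [abs_of_nonpos hu0, abs_of_nonneg hv0]
    nlinarith [mul_nonneg (mul_nonneg hv0 (neg_nonneg.2 hu0)) (by linarith : 0 ≤ 1 - v),
      mul_nonneg (neg_nonneg.2 hu0) (by nlinarith : 0 ≤ 1 - v * v)]
  · rw [abs_of_nonpos hu0, abs_of_nonpos hv0]
    nlinarith [mul_nonneg (neg_nonneg.2 hu0) (neg_nonneg.2 hv0),
      mul_nonneg (mul_nonneg (neg_nonneg.2 hu0) (neg_nonneg.2 hv0)) (by linarith : 0 ≤ 2 + u + v)]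

lemma abs_add_div_one_add_mul_le {u v : ℝ} (hu : |u| ≤ 1) (hv : |v| ≤ 1) :
    |(u + v) / (1 + u * v)| ≤ |u| + |v| := by
  have huv : 0 ≤ 1 + u * v := by
    nlinarith [abs_mul u v, abs_nonneg u, abs_nonneg v, neg_abs_le (u * v)]
  rcases huv.eq_or_lt with h | h
  · rw [← h, div_zero, abs_zero]
    positivity
  rw [abs_div, abs_of_pos h, div_le_iff₀ h, abs_le]
  have hneg := add_le_abs_add_abs_mul_one_add_mul (u := -u) (v := -v)
    (by rwa [abs_neg]) (by rwa [abs_neg])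
  rw [abs_neg, abs_neg, neg_mul_neg] at hneg
  exact ⟨by linarith, add_le_abs_add_abs_mul_one_add_mul hu hv⟩

lemma abs_mul_sub_mul_div_mul_add_mul_le {x x' y y' : ℝ}
    (hx : 0 ≤ x) (hx' : 0 ≤ x') (hy : 0 ≤ y) (hy' : 0 ≤ y') :
    |(x * y - x' * y') / (x * y + x' * y')| ≤
      |(x - x') / (x + x')| + |(y - y') / (y + y')| := by
  rcases (add_nonneg hx hx').eq_or_lt' with hxx | hxx
  · obtain ⟨rfl, rfl⟩ : x = 0 ∧ x' = 0 := ⟨by linarith, by linarith⟩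
    simp only [zero_mul, sub_self, zero_div, abs_zero, zero_add]
    exact abs_nonneg _
  rcases (add_nonneg hy hy').eq_or_lt' with hyy | hyy
  · obtain ⟨rfl, rfl⟩ : y = 0 ∧ y' = 0 := ⟨by linarith, by linarith⟩
    simp only [mul_zero, sub_self, zero_div, abs_zero, add_zero]
    exact abs_nonneg _
  rw [mul_sub_mul_div_mul_add_mul hxx.ne' hyy.ne']
  exact abs_add_div_one_add_mul_le (abs_sub_div_add_le_one hx hx') (abs_sub_div_add_le_one hy hy')

lemma kappa_nonneg (ν : Measure ℝ) : 0 ≤ kappa ν :=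
  integral_nonneg fun _ => abs_nonneg _

section

variable {α : Type*} [MeasurableSpace α] (μ : Measure α)

lemma kappa_map [SFinite μ] {g : α → ℝ} (hg : Measurable g) :
    kappa (μ.map g) = ∫ q : α × α, |(g q.1 - g q.2) / (g q.1 + g q.2)| ∂(μ.prod μ) := by
  have hF : Measurable fun p : ℝ × ℝ => |(p.1 - p.2) / (p.1 + p.2)| := by fun_prop
  rw [kappa, Measure.map_prod_map μ μ hg hg,
    integral_map (hg.prodMap hg).aemeasurable hF.aestronglyMeasurable]
  rfl

lemma ae_prod_of_ae {p : α → Prop} (hp : ∀ᵐ a ∂μ, p a) :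
    ∀ᵐ q ∂(μ.prod μ), p q.1 ∧ p q.2 :=
  (Measure.quasiMeasurePreserving_fst.ae hp).and (Measure.quasiMeasurePreserving_snd.ae hp)

lemma integrable_abs_sub_div_add [IsFiniteMeasure μ] {g : α → ℝ} (hg : Measurable g)
    (hnn : ∀ᵐ a ∂μ, 0 ≤ g a) :
    Integrable (fun q : α × α => |(g q.1 - g q.2) / (g q.1 + g q.2)|) (μ.prod μ) :=
  (integrable_const (1 : ℝ)).mono' (Measurable.aestronglyMeasurable (by fun_prop)) <| (ae_prod_of_ae μ hnn).mono fun q hq => by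
    simpa only [Real.norm_eq_abs, abs_abs] using abs_sub_div_add_le_one hq.1 hq.2

lemma kappa_map_mul_le [IsFiniteMeasure μ] {f g : α → ℝ} (hf : Measurable f)
    (hg : Measurable g) (hf₀ : ∀ᵐ a ∂μ, 0 ≤ f a) (hg₀ : ∀ᵐ a ∂μ, 0 ≤ g a) :
    kappa (μ.map (f * g)) ≤ kappa (μ.map f) + kappa (μ.map g) := by
  rw [kappa_map μ (hf.mul hg), kappa_map μ hf, kappa_map μ hg,
    ← integral_add (integrable_abs_sub_div_add μ hf hf₀) (integrable_abs_sub_div_add μ hg hg₀)]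
  refine integral_mono_ae (integrable_abs_sub_div_add μ (hf.mul hg) ?_)
    ((integrable_abs_sub_div_add μ hf hf₀).add (integrable_abs_sub_div_add μ hg hg₀)) ?_
  · filter_upwards [hf₀, hg₀] with a hfa hga using mul_nonneg hfa hga
  · filter_upwards [ae_prod_of_ae μ (hf₀.and hg₀)] with q ⟨⟨hf₁, hg₁⟩, hf₂, hg₂⟩
    exact abs_mul_sub_mul_div_mul_add_mul_le hf₁ hf₂ hg₁ hg₂

end

/-- For nonnegative random variables `X, Y` with joint law `μ` (a probability measure on
`ℝ × ℝ` carried by the nonnegative quadrant), `κ(XY) ≤ 6 κ(X) + 6 κ(Y)`. -/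
theorem kappa_mul_le (μ : Measure (ℝ × ℝ)) [IsProbabilityMeasure μ]
    (hnn : ∀ᵐ p ∂μ, 0 ≤ p.1 ∧ 0 ≤ p.2) :
    kappa (μ.map (fun p => p.1 * p.2)) ≤
      6 * kappa (μ.map Prod.fst) + 6 * kappa (μ.map Prod.snd) := by
  have h : kappa (μ.map fun p => p.1 * p.2) ≤ kappa (μ.map Prod.fst) + kappa (μ.map Prod.snd) :=
    kappa_map_mul_le μ measurable_fst measurable_snd (hnn.mono fun _ h => h.1)
      (hnn.mono fun _ h => h.2)
  linarith [kappa_nonneg (μ.map Prod.fst), kappa_nonneg (μ.map Prod.snd)]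
end

section
/- If non-negative random variables $X_n$ converge weakly (in distribution) to $X$, then $\kappa(X) \leq \liminf_n \kappa(X_n)$, where $\kappa(Z) = \mathbb{E}|\tfrac{Z-Z'}{Z+Z'}|$ with $Z'$ an independent copy of $Z$ and the convention $0/0 = 0$. -/
open MeasureTheory Filter Topology

lemma lintegral_le_liminf_lintegral_of_lowerSemicontinuous {Ω : Type*} [MeasurableSpace Ω]
    [TopologicalSpace Ω] [OpensMeasurableSpace Ω] {μ : Measure Ω} {μs : ℕ → Measure Ω}
    {f : Ω → ℝ} (f_lsc : LowerSemicontinuous f) (f_nn : 0 ≤ f)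
    (h_opens : ∀ G, IsOpen G → μ G ≤ atTop.liminf (fun i ↦ μs i G)) :
    ∫⁻ x, ENNReal.ofReal (f x) ∂μ ≤ atTop.liminf (fun i ↦ ∫⁻ x, ENNReal.ofReal (f x) ∂(μs i)) := by
  simp_rw [lintegral_eq_lintegral_meas_lt _ (Eventually.of_forall f_nn)
    f_lsc.measurable.aemeasurable]
  calc ∫⁻ t in Set.Ioi 0, μ {x | t < f x}
      ≤ ∫⁻ t in Set.Ioi 0, atTop.liminf (fun i ↦ μs i {x | t < f x}) :=
        lintegral_mono fun t ↦ h_opens _ (f_lsc.isOpen_preimage t)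
    _ ≤ atTop.liminf (fun i ↦ ∫⁻ t in Set.Ioi 0, μs i {x | t < f x}) :=
        lintegral_liminf_le fun _ ↦ Antitone.measurable fun _ _ hst ↦
          measure_mono fun _ hx ↦ hst.trans_lt hx

lemma lowerSemicontinuous_abs_sub_div_add :
    LowerSemicontinuous (fun p : ℝ × ℝ ↦ |(p.1 - p.2) / (p.1 + p.2)|) := by
  intro p
  rcases eq_or_ne (p.1 + p.2) 0 with h | h
  · intro y hy
    have hy0 : y < 0 := by simpa [h] using hy
    exact Eventually.of_forall fun _ ↦ hy0.trans_le (abs_nonneg _)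
  · exact (((continuousAt_fst.sub continuousAt_snd).div
      (continuousAt_fst.add continuousAt_snd) h).abs).lowerSemicontinuousAt

lemma abs_sub_div_add_le_one_s5 {x y : ℝ} (hx : 0 ≤ x) (hy : 0 ≤ y) :
    |(x - y) / (x + y)| ≤ 1 := by
  rcases (add_nonneg hx hy).eq_or_lt with h | h
  · simp [← h]
  · rw [abs_div, abs_of_pos h, div_le_one h, abs_le]
    constructor <;> linarith

lemma lintegral_abs_sub_div_add_le_one {μ : Measure ℝ} [IsProbabilityMeasure μ]
    (hμ : ∀ᵐ x ∂μ, 0 ≤ x) :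
    ∫⁻ p, ENNReal.ofReal |(p.1 - p.2) / (p.1 + p.2)| ∂(μ.prod μ) ≤ 1 := by
  have h_fst := Measure.quasiMeasurePreserving_fst (μ := μ) (ν := μ) |>.ae hμ
  have h_snd := Measure.quasiMeasurePreserving_snd (μ := μ) (ν := μ) |>.ae hμ
  calc ∫⁻ p, ENNReal.ofReal |(p.1 - p.2) / (p.1 + p.2)| ∂(μ.prod μ)
      ≤ ∫⁻ _, 1 ∂(μ.prod μ) := by
        refine lintegral_mono_ae ?_
        filter_upwards [h_fst, h_snd] with p hp₁ hp₂
        exact ENNReal.ofReal_le_one.mpr (abs_sub_div_add_le_one_s5 hp₁ hp₂)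
    _ = 1 := by simp

lemma kappa_eq_toReal_lintegral (μ : Measure ℝ) :
    kappa μ = (∫⁻ p, ENNReal.ofReal |(p.1 - p.2) / (p.1 + p.2)| ∂(μ.prod μ)).toReal :=
  integral_eq_lintegral_of_nonneg_ae (Eventually.of_forall fun _ ↦ abs_nonneg _)
    lowerSemicontinuous_abs_sub_div_add.measurable.aestronglyMeasurable

theorem kappa_liminf_general (μ : ℕ → ProbabilityMeasure ℝ) (ν : ProbabilityMeasure ℝ)
    (hnn : ∀ n, ∀ᵐ x ∂(μ n : Measure ℝ), 0 ≤ x)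
    (hconv : Tendsto μ atTop (𝓝 ν)) :
    kappa (ν : Measure ℝ) ≤ liminf (fun n => kappa (μ n : Measure ℝ)) atTop := by
  have h_prod : Tendsto (fun n ↦ (μ n).prod (μ n)) atTop (𝓝 (ν.prod ν)) :=
    (ProbabilityMeasure.continuous_prod.tendsto _).comp (hconv.prodMk_nhds hconv)
  have h_lintegral := lintegral_le_liminf_lintegral_of_lowerSemicontinuous
    lowerSemicontinuous_abs_sub_div_add (fun _ ↦ abs_nonneg _)
    fun _ hG ↦ ProbabilityMeasure.le_liminf_measure_open_of_tendsto h_prod hG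
  have h_bound := fun n ↦ lintegral_abs_sub_div_add_le_one (hnn n)
  simp only [kappa_eq_toReal_lintegral]
  rw [ENNReal.liminf_toReal_eq ENNReal.one_ne_top (Eventually.of_forall h_bound)]
  refine ENNReal.toReal_mono (ne_top_of_le_ne_top ENNReal.one_ne_top ?_) h_lintegral
  exact (liminf_le_liminf (Eventually.of_forall h_bound)).trans_eq (liminf_const 1)

/-- Lower semicontinuity of `κ` under weak convergence (convergence in distribution)
of nonnegative random variables. -/
theorem kappa_liminf (μ : ℕ → ProbabilityMeasure ℝ) (ν : ProbabilityMeasure ℝ)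
    (hnn : ∀ n, ∀ᵐ x ∂(μ n : Measure ℝ), 0 ≤ x)
    (hnnν : ∀ᵐ x ∂(ν : Measure ℝ), 0 ≤ x)
    (hconv : Tendsto μ atTop (𝓝 ν)) :
    kappa (ν : Measure ℝ) ≤ liminf (fun n => kappa (μ n : Measure ℝ)) atTop :=
  kappa_liminf_general μ ν hnn hconv
end

section
/- Let $Q$ be a probability distribution on non-negative integers with moment generating function $\psi(x) = \sum_{k \geq 0} Q(k) x^k$, and suppose $\psi(\rho) < \rho$ for some $\rho > 1$. Let $Z$ be the total number of vertices in a Galton–Watson tree with offspring distribution $Q$. Then for every real $t \geq 1$, $\mathbb{P}(Z \geq t) \leq \rho \left(\frac{\psi(\rho)}{\rho}\right)^t$. -/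
/-!
On the event `Z ≥ t` the walk, which starts at `1` and moves down by at most one per step,
stays positive up to time `n = ⌈t⌉ - 1`; hence `Y 0 + ⋯ + Y (n - 1) ≥ n`. The exponential
Markov inequality for `ρ ^ (Y 0 + ⋯ + Y (n - 1))`, whose mean is `ψ(ρ) ^ n` by independence,
bounds this by `(ψ(ρ) / ρ) ^ n`. Since `ψ(ρ) ≥ 1` and `n ≥ t - 1`, replacing `n` by `t` costs
at most the factor `ρ`.
-/

open MeasureTheory ProbabilityTheory Finset
open scoped ENNReal

noncomputable def PMF.genFun (Q : PMF ℕ) (x : ℝ) : ℝ := ∑' k, (Q k).toReal * x ^ k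

namespace PMF

variable (Q : PMF ℕ) {ρ : ℝ}

lemma one_le_genFun (hρ : 1 ≤ ρ) (hsum : Summable fun k => (Q k).toReal * ρ ^ k) :
    1 ≤ Q.genFun ρ := by
  have hQ : ∑' k, (Q k).toReal = 1 := by
    rw [← ENNReal.tsum_toReal_eq fun k => (Q.apply_lt_top k).ne, Q.tsum_coe, ENNReal.toReal_one]
  rw [← hQ]
  refine Summable.tsum_le_tsum (fun k => le_mul_of_one_le_right ENNReal.toReal_nonneg
    (one_le_pow₀ hρ)) ?_ hsum
  exact ENNReal.summable_toReal (Q.tsum_coe ▸ ENNReal.one_ne_top)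

lemma ofReal_genFun (hρ : 0 ≤ ρ) (hsum : Summable fun k => (Q k).toReal * ρ ^ k) :
    ENNReal.ofReal (Q.genFun ρ) = ∑' k, Q k * ENNReal.ofReal ρ ^ k := by
  rw [genFun, ENNReal.ofReal_tsum_of_nonneg (fun k => by positivity) hsum]
  congr 1 with k
  rw [ENNReal.ofReal_mul ENNReal.toReal_nonneg, ENNReal.ofReal_toReal (Q.apply_lt_top k).ne,
    ENNReal.ofReal_pow hρ]

end PMF

/-- A walk started at `1` with steps `y i - 1 ≥ -1` cannot jump over `0`. -/
lemma le_sum_range_of_walk_ne_zero {y : ℕ → ℕ} {n : ℕ}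
    (h : ∀ u, 1 ≤ u → u ≤ n → 1 + ∑ i ∈ range u, ((y i : ℤ) - 1) ≠ 0) :
    n ≤ ∑ i ∈ range n, y i := by
  suffices ∀ u ≤ n, u ≤ ∑ i ∈ range u, y i from this n le_rfl
  intro u hu
  induction u with
  | zero => exact Nat.zero_le _
  | succ u ih =>
    have hne := h (u + 1) (by omega) hu
    have := ih (by omega)
    rw [sum_sub_distrib, ← Nat.cast_sum, sum_range_succ] at hne
    simp only [sum_const, card_range, nsmul_eq_mul, mul_one] at hne
    rw [sum_range_succ]
    omega

lemma pow_le_inv_mul_rpow {b t : ℝ} {n : ℕ} (hb0 : 0 < b) (hb1 : b ≤ 1) (hn : t - 1 ≤ n) :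
    b ^ n ≤ b⁻¹ * b ^ t := by
  rw [← Real.rpow_natCast, ← Real.rpow_neg_one, ← Real.rpow_add hb0, neg_add_eq_sub]
  exact Real.rpow_le_rpow_of_exponent_ge hb0 hb1 hn

section

variable {Ω : Type*} [MeasurableSpace Ω] {μ : Measure Ω}

lemma lintegral_pow_eq_tsum_of_map_eq {Q : PMF ℕ} {Y : Ω → ℕ} (hY : Measurable Y)
    (hQ : μ.map Y = Q.toMeasure) (r : ℝ≥0∞) :
    ∫⁻ ω, r ^ Y ω ∂μ = ∑' k, Q k * r ^ k := by
  rw [← lintegral_map measurable_from_top hY, hQ, lintegral_countable']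
  congr 1 with k
  rw [Q.toMeasure_apply_singleton k (measurableSet_singleton k), mul_comm]

lemma mul_measure_le_sum_le_prod_lintegral_pow {ι : Type*} {Y : ι → Ω → ℕ}
    (hmeas : ∀ i, Measurable (Y i)) (hindep : iIndepFun Y μ) {r : ℝ≥0∞} (hr : 1 ≤ r)
    (s : Finset ι) (m : ℕ) :
    r ^ m * μ {ω | m ≤ ∑ i ∈ s, Y i ω} ≤ ∏ i ∈ s, ∫⁻ ω, r ^ Y i ω ∂μ := by
  have hpow : Measurable fun k : ℕ => r ^ k := measurable_from_top
  calc r ^ m * μ {ω | m ≤ ∑ i ∈ s, Y i ω}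
      ≤ r ^ m * μ {ω | r ^ m ≤ ∏ i ∈ s, r ^ Y i ω} := by
        gcongr with ω
        rw [prod_pow_eq_pow_sum]
        exact pow_le_pow_right₀ hr
    _ ≤ ∫⁻ ω, ∏ i ∈ s, r ^ Y i ω ∂μ :=
        mul_meas_ge_le_lintegral₀ (s.measurable_prod fun i _ => hpow.comp (hmeas i)).aemeasurable _
    _ = ∏ i ∈ s, ∫⁻ ω, r ^ Y i ω ∂μ :=
        lintegral_prod_eq_prod_lintegral_of_indepFun s _ (hindep.comp _ fun _ => hpow)
          fun i => hpow.comp (hmeas i)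

lemma measureReal_le_sum_range_le {Q : PMF ℕ} {Y : ℕ → Ω → ℕ}
    (hmeas : ∀ i, Measurable (Y i)) (hiid : ∀ i, μ.map (Y i) = Q.toMeasure)
    (hindep : iIndepFun Y μ) {ρ : ℝ} (hρ : 1 ≤ ρ)
    (hsum : Summable fun k => (Q k).toReal * ρ ^ k) (n m : ℕ) :
    μ.real {ω | m ≤ ∑ i ∈ range n, Y i ω} ≤ Q.genFun ρ ^ n / ρ ^ m := by
  have hρ0 : 0 < ρ := by linarith
  have hr : 1 ≤ ENNReal.ofReal ρ := ENNReal.one_le_ofReal.2 hρ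
  have hmean : ∀ i, ∫⁻ ω, ENNReal.ofReal ρ ^ Y i ω ∂μ = ENNReal.ofReal (Q.genFun ρ) := fun i => by
    rw [lintegral_pow_eq_tsum_of_map_eq (hmeas i) (hiid i), Q.ofReal_genFun hρ0.le hsum]
  have h := mul_measure_le_sum_le_prod_lintegral_pow hmeas hindep hr (range n) m
  simp only [hmean, prod_const, card_range] at h
  have hψ : 0 ≤ Q.genFun ρ := zero_le_one.trans (Q.one_le_genFun hρ hsum)
  refine ENNReal.toReal_le_of_le_ofReal (by positivity) ?_
  rw [ENNReal.ofReal_div_of_pos (by positivity), ENNReal.ofReal_pow hψ, ENNReal.ofReal_pow hρ0.le,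
    ENNReal.le_div_iff_mul_le (Or.inl (pow_ne_zero m (zero_lt_one.trans_le hr).ne'))
      (Or.inl (ENNReal.pow_ne_top ENNReal.ofReal_ne_top)), mul_comm]
  exact h

end

/-- `Z` is the hitting time of `0` by `S u = 1 + ∑_{i<u} (Y i - 1)`, so the event `{Z ≥ t}` is
`{ω | S u ω ≠ 0 for all integers 1 ≤ u < t}`. -/
theorem gw_total_progeny_tail_general {Ω : Type*} [MeasureSpace Ω]
    [IsProbabilityMeasure (volume : Measure Ω)]
    (Q : PMF ℕ) (Y : ℕ → Ω → ℕ) (hmeas : ∀ i, Measurable (Y i))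
    (hiid : ∀ i, Measure.map (Y i) volume = Q.toMeasure)
    (hindep : iIndepFun Y)
    (ρ : ℝ) (hρ : 1 < ρ)
    (hsum : Summable (fun k => (Q k).toReal * ρ ^ k))
    (hsub : (∑' k, (Q k).toReal * ρ ^ k) < ρ)
    (t : ℝ) :
    (volume {ω : Ω | ∀ u : ℕ, 1 ≤ u → (u : ℝ) < t →
        1 + ∑ i ∈ Finset.range u, ((Y i ω : ℤ) - 1) ≠ 0}).toReal ≤
      ρ * ((∑' k, (Q k).toReal * ρ ^ k) / ρ) ^ t := by
  change _ ≤ ρ * (Q.genFun ρ / ρ) ^ t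
  have hρ0 : 0 < ρ := by linarith
  have hψ : 1 ≤ Q.genFun ρ := Q.one_le_genFun hρ.le hsum
  set n := ⌈t⌉₊ - 1
  have hn : t - 1 ≤ n := by
    have : (⌈t⌉₊ : ℝ) ≤ n + 1 := by exact_mod_cast (by omega : ⌈t⌉₊ ≤ n + 1)
    linarith [Nat.le_ceil t]
  have hevent : {ω : Ω | ∀ u : ℕ, 1 ≤ u → (u : ℝ) < t →
      1 + ∑ i ∈ range u, ((Y i ω : ℤ) - 1) ≠ 0} ⊆ {ω | n ≤ ∑ i ∈ range n, Y i ω} :=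
    fun ω hω => le_sum_range_of_walk_ne_zero fun u hu hun => hω u hu (Nat.lt_ceil.1 (by omega))
  calc volume.real _ ≤ volume.real {ω | n ≤ ∑ i ∈ range n, Y i ω} := measureReal_mono hevent
    _ ≤ (Q.genFun ρ / ρ) ^ n := by
      rw [div_pow]; exact measureReal_le_sum_range_le hmeas hiid hindep hρ.le hsum n n
    _ ≤ (Q.genFun ρ / ρ)⁻¹ * (Q.genFun ρ / ρ) ^ t :=
      pow_le_inv_mul_rpow (by positivity) ((div_le_one hρ0).2 hsub.le) hn
    _ ≤ ρ * (Q.genFun ρ / ρ) ^ t := by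
      gcongr
      rw [inv_div]
      exact div_le_self hρ0.le hψ

/-- Tail bound for the total progeny of a subcritical Galton–Watson tree, in the
equivalent random-walk formulation: if `Y i` are i.i.d. with offspring law `Q`,
`S t = 1 + ∑_{i<t} (Y i - 1)`, and `Z` is the hitting time of `0` by `S` (the total
progeny), then for real `t ≥ 1`, `ℙ(Z ≥ t) ≤ ρ (ψ(ρ)/ρ)^t` whenever `ψ(ρ) < ρ`
for some `ρ > 1`, where `ψ` is the generating function of `Q`.
The event `{Z ≥ t}` is `{ω | S u ω ≠ 0 for all integers 1 ≤ u < t}`. -/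
theorem gw_total_progeny_tail {Ω : Type*} [MeasureSpace Ω]
    [IsProbabilityMeasure (volume : Measure Ω)]
    (Q : PMF ℕ) (Y : ℕ → Ω → ℕ) (hmeas : ∀ i, Measurable (Y i))
    (hiid : ∀ i, Measure.map (Y i) volume = Q.toMeasure)
    (hindep : iIndepFun Y)
    (ρ : ℝ) (hρ : 1 < ρ)
    (hsum : Summable (fun k => (Q k).toReal * ρ ^ k))
    (hsub : (∑' k, (Q k).toReal * ρ ^ k) < ρ)
    (t : ℝ) (ht : 1 ≤ t) :
    (volume {ω : Ω | ∀ u : ℕ, 1 ≤ u → (u : ℝ) < t →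
        1 + ∑ i ∈ Finset.range u, ((Y i ω : ℤ) - 1) ≠ 0}).toReal ≤
      ρ * ((∑' k, (Q k).toReal * ρ ^ k) / ρ) ^ t :=
  gw_total_progeny_tail_general Q Y hmeas hiid hindep ρ hρ hsum hsub t
end

section
/- Let $\mu$ be a probability measure on $\mathbb{R}$, $\lambda \in \mathbb{R}$, and $a, b, \eta > 0$ with $\operatorname{Im} g_\mu(\lambda + i\eta) \geq a$ and $\operatorname{Im} g_\mu(\lambda + iy) \leq b$ for all $y \geq \eta$. Let $I = [\lambda - s/2, \lambda + s/2]$ with $s \geq 2\eta$. Then $\mu(I)/s \leq b$, and if moreover $\rho := s/\eta \geq 8b/a$, then $\mu(I)/s \geq a/(2\rho)$. -/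
/-!
`Im g_μ(λ + iy) = ∫ P_y(x - λ) dμ(x)` with the Poisson kernel `P_y(t) = y / (t² + y²)`.
On `I = [λ - y, λ + y]` the kernel `P_y` is at least `1 / (2y)`, which bounds `μ(I)` by `2y · Im g_μ(λ + iy)`.
Conversely `P_η ≤ 1 / η` on `I`, while off `I` the kernel `P_η` is dominated by `(2η / y) P_y`; so
`Im g_μ(λ + iη) ≤ μ(I) / η + (2η / y) Im g_μ(λ + iy)`. Taking `y = s / 2`, the hypothesis `ρ ≥ 8b / a` makes
the tail term at most `a / 2`, leaving `μ(I) / η ≥ a / 2`.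
-/

open MeasureTheory Complex

/-- The Cauchy–Stieltjes transform `g_μ(z) = ∫ (λ' - z)⁻¹ dμ(λ')`. -/
noncomputable def stieltjes (μ : Measure ℝ) (z : ℂ) : ℂ := ∫ x, ((x : ℂ) - z)⁻¹ ∂μ

/-- The Poisson kernel of the upper half-plane at `λ + iy`, without the factor `1 / π`. -/
noncomputable def halfPlanePoissonKernel (lam y x : ℝ) : ℝ := y / ((x - lam) ^ 2 + y ^ 2)

namespace halfPlanePoissonKernel

variable {lam y η x : ℝ}

lemma pos (hy : 0 < y) : 0 < halfPlanePoissonKernel lam y x :=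
  div_pos hy (by positivity)

lemma le_inv (hy : 0 < y) : halfPlanePoissonKernel lam y x ≤ 1 / y := by
  rw [halfPlanePoissonKernel, div_le_div_iff₀ (by positivity) hy]
  nlinarith [sq_nonneg (x - lam)]

lemma inv_two_mul_le (hy : 0 < y) (hx : x ∈ Set.Icc (lam - y) (lam + y)) :
    1 / (2 * y) ≤ halfPlanePoissonKernel lam y x := by
  obtain ⟨hx₁, hx₂⟩ := hx
  rw [halfPlanePoissonKernel, div_le_div_iff₀ (by positivity) (by positivity)]
  nlinarith

/-- Off `[λ - y, λ + y]` both kernels are comparable to `1 / (x - λ)²`. -/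
lemma le_mul_of_notMem_Icc (hη : 0 ≤ η) (hy : 0 < y) (hx : x ∉ Set.Icc (lam - y) (lam + y)) :
    halfPlanePoissonKernel lam η x ≤ 2 * η / y * halfPlanePoissonKernel lam y x := by
  have hfar : y ^ 2 ≤ (x - lam) ^ 2 := by
    rw [Set.mem_Icc, not_and_or, not_le, not_le] at hx
    rcases hx with h | h <;> nlinarith
  have hrw : 2 * η / y * halfPlanePoissonKernel lam y x = 2 * η / ((x - lam) ^ 2 + y ^ 2) := by
    rw [halfPlanePoissonKernel]; field_simp
  rw [hrw, halfPlanePoissonKernel, div_le_div_iff₀ (by nlinarith) (by positivity)]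
  nlinarith [mul_nonneg hη (sq_nonneg η)]

lemma continuous (hy : 0 < y) : Continuous (halfPlanePoissonKernel lam y) :=
  continuous_const.div (by fun_prop) fun _ ↦ by positivity

lemma integrable (μ : Measure ℝ) [IsFiniteMeasure μ] (hy : 0 < y) :
    Integrable (halfPlanePoissonKernel lam y) μ := by
  refine (integrable_const (1 / y)).mono' (continuous hy).aestronglyMeasurable ?_
  filter_upwards with x
  rw [Real.norm_eq_abs, abs_of_pos (pos hy)]
  exact le_inv hy

end halfPlanePoissonKernel

open halfPlanePoissonKernel

lemma im_inv_ofReal_sub (lam y x : ℝ) :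
    (((x : ℂ) - (lam + y * I))⁻¹).im = halfPlanePoissonKernel lam y x := by
  rw [inv_im, halfPlanePoissonKernel]
  simp only [sub_im, ofReal_im, add_im, mul_im, ofReal_re, I_im, mul_one, I_re, mul_zero, add_zero,
    zero_add, zero_sub, neg_neg, normSq_apply, sub_re, add_re, mul_re, sub_self, mul_neg, neg_mul]
  ring

lemma integrable_inv_ofReal_sub (μ : Measure ℝ) [IsFiniteMeasure μ] (lam : ℝ) {y : ℝ}
    (hy : 0 < y) : Integrable (fun x : ℝ ↦ ((x : ℂ) - (lam + y * I))⁻¹) μ := by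
  have hy_le : ∀ x : ℝ, y ≤ ‖(x : ℂ) - (lam + y * I)‖ := fun x ↦ by
    simpa [abs_of_pos hy] using abs_im_le_norm ((x : ℂ) - (lam + y * I))
  have hne : ∀ x : ℝ, (x : ℂ) - (lam + y * I) ≠ 0 := fun x h ↦ by
    simpa [h] using (hy.trans_le (hy_le x)).ne'
  refine (integrable_const (1 / y)).mono'
    (Continuous.inv₀ (by fun_prop) hne).aestronglyMeasurable ?_
  filter_upwards with x
  rw [norm_inv, one_div]
  exact inv_anti₀ hy (hy_le x)

lemma im_stieltjes_eq_integral (μ : Measure ℝ) [IsFiniteMeasure μ] (lam : ℝ) {y : ℝ} (hy : 0 < y) :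
    (stieltjes μ (lam + y * I)).im = ∫ x, halfPlanePoissonKernel lam y x ∂μ := by
  rw [stieltjes, ← RCLike.im_eq_complex_im, ← integral_im (integrable_inv_ofReal_sub μ lam hy)]
  simp only [RCLike.im_eq_complex_im, im_inv_ofReal_sub]

section MassBounds

variable (μ : Measure ℝ) [IsFiniteMeasure μ] (lam : ℝ) {y η : ℝ}

lemma measureReal_Icc_le_mul_im_stieltjes (hy : 0 < y) :
    μ.real (Set.Icc (lam - y) (lam + y)) ≤ 2 * y * (stieltjes μ (lam + y * I)).im := by
  rw [im_stieltjes_eq_integral μ lam hy, ← div_le_iff₀' (by positivity)]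
  calc μ.real (Set.Icc (lam - y) (lam + y)) / (2 * y)
      = ∫ _ in Set.Icc (lam - y) (lam + y), 1 / (2 * y) ∂μ := by
        rw [setIntegral_const, smul_eq_mul, mul_one_div]
    _ ≤ ∫ x in Set.Icc (lam - y) (lam + y), halfPlanePoissonKernel lam y x ∂μ :=
        setIntegral_mono_on (integrable_const _).integrableOn (integrable μ hy).integrableOn
          measurableSet_Icc fun _ hx ↦ inv_two_mul_le hy hx
    _ ≤ ∫ x, halfPlanePoissonKernel lam y x ∂μ :=
        setIntegral_le_integral (integrable μ hy) (.of_forall fun _ ↦ (pos hy).le)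

lemma im_stieltjes_le_measureReal_Icc_div_add (hη : 0 < η) (hy : 0 < y) :
    (stieltjes μ (lam + η * I)).im
      ≤ μ.real (Set.Icc (lam - y) (lam + y)) / η + 2 * η / y * (stieltjes μ (lam + y * I)).im := by
  set J := Set.Icc (lam - y) (lam + y)
  have hnear : ∫ x in J, halfPlanePoissonKernel lam η x ∂μ ≤ μ.real J / η :=
    calc ∫ x in J, halfPlanePoissonKernel lam η x ∂μ ≤ ∫ _ in J, 1 / η ∂μ :=
          setIntegral_mono_on (integrable μ hη).integrableOn
            (integrable_const (1 / η)).integrableOn measurableSet_Icc fun _ _ ↦ le_inv hη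
      _ = μ.real J / η := by rw [setIntegral_const, smul_eq_mul, mul_one_div]
  have hfar : ∫ x in Jᶜ, halfPlanePoissonKernel lam η x ∂μ
      ≤ 2 * η / y * ∫ x, halfPlanePoissonKernel lam y x ∂μ :=
    calc ∫ x in Jᶜ, halfPlanePoissonKernel lam η x ∂μ
        ≤ ∫ x in Jᶜ, 2 * η / y * halfPlanePoissonKernel lam y x ∂μ :=
          setIntegral_mono_on (integrable μ hη).integrableOn
            ((integrable μ hy).const_mul _).integrableOn measurableSet_Icc.compl
            fun _ hx ↦ le_mul_of_notMem_Icc hη.le hy hx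
      _ = 2 * η / y * ∫ x in Jᶜ, halfPlanePoissonKernel lam y x ∂μ := integral_const_mul _ _
      _ ≤ 2 * η / y * ∫ x, halfPlanePoissonKernel lam y x ∂μ := by
          gcongr ?_ * ?_
          exact setIntegral_le_integral (integrable μ hy) (.of_forall fun _ ↦ (pos hy).le)
  rw [im_stieltjes_eq_integral μ lam hη, im_stieltjes_eq_integral μ lam hy,
    ← integral_add_compl measurableSet_Icc (integrable μ hη)]
  exact add_le_add hnear hfar

end MassBounds

theorem weak_deconvolution_general (μ : Measure ℝ) [IsProbabilityMeasure μ]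
    (lam a b η : ℝ) (ha : 0 < a) (hη : 0 < η)
    (hlow : a ≤ (stieltjes μ (lam + η * I)).im)
    (hup : ∀ y ≥ η, (stieltjes μ (lam + y * I)).im ≤ b)
    (s : ℝ) (hs : 2 * η ≤ s) :
    (μ (Set.Icc (lam - s / 2) (lam + s / 2))).toReal / s ≤ b ∧
      (s / η ≥ 8 * b / a →
        a / (2 * (s / η)) ≤ (μ (Set.Icc (lam - s / 2) (lam + s / 2))).toReal / s) := by
  have hs₀ : 0 < s := by linarith
  set m := μ.real (Set.Icc (lam - s / 2) (lam + s / 2))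
  set G := (stieltjes μ (lam + (s / 2 : ℝ) * I)).im
  have hG : G ≤ b := hup (s / 2) (by linarith)
  have hupper : m ≤ s * G := by
    simpa only [mul_div_cancel₀ s two_ne_zero] using
      measureReal_Icc_le_mul_im_stieltjes μ lam (half_pos hs₀)
  have hlower : a ≤ m / η + 2 * η / (s / 2) * G :=
    hlow.trans (im_stieltjes_le_measureReal_Icc_div_add μ lam hη (half_pos hs₀))
  change m / s ≤ b ∧ (s / η ≥ 8 * b / a → a / (2 * (s / η)) ≤ m / s)
  refine ⟨(div_le_iff₀ hs₀).2 (by nlinarith), fun hρ ↦ ?_⟩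
  rw [ge_iff_le, div_le_div_iff₀ ha hη] at hρ
  have htail : 2 * η / (s / 2) * G ≤ a / 2 := by
    rw [div_div_eq_mul_div, div_mul_eq_mul_div, div_le_div_iff₀ hs₀ two_pos]
    nlinarith
  have hmass : a / 2 * η ≤ m := (le_div_iff₀ hη).1 (by linarith)
  calc a / (2 * (s / η)) = a / 2 * η / s := by field_simp
    _ ≤ m / s := by gcongr

/-- Weak regularity of `μ` from two-sided bounds on the Stieltjes transform:
if `Im g_μ(λ + iη) ≥ a` and `Im g_μ(λ + iy) ≤ b` for all `y ≥ η`, then for the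
interval `I = [λ - s/2, λ + s/2]` with `s ≥ 2η` one has `μ(I)/s ≤ b`, and if
moreover `ρ = s/η ≥ 8b/a` then `μ(I)/s ≥ a/(2ρ)`. -/
theorem weak_deconvolution (μ : Measure ℝ) [IsProbabilityMeasure μ]
    (lam a b η : ℝ) (ha : 0 < a) (hb : 0 < b) (hη : 0 < η)
    (hlow : a ≤ (stieltjes μ (lam + η * I)).im)
    (hup : ∀ y ≥ η, (stieltjes μ (lam + y * I)).im ≤ b)
    (s : ℝ) (hs : 2 * η ≤ s) :
    (μ (Set.Icc (lam - s / 2) (lam + s / 2))).toReal / s ≤ b ∧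
      (s / η ≥ 8 * b / a →
        a / (2 * (s / η)) ≤ (μ (Set.Icc (lam - s / 2) (lam + s / 2))).toReal / s) :=
  weak_deconvolution_general μ lam a b η ha hη hlow hup s hs
end

section
/- For any $0 < s < 1$ and any compact interval $I = [a,b] \subset \mathbb{R}$, there exists a constant $C = C(s, a, b)$ such that for every probability measure $\mu$ on $\mathbb{R}$ and every $\eta \geq 0$, $\int_I |g_\mu(\lambda + i\eta)|^s \, d\lambda \leq C$, where for $\eta = 0$ the boundary value $g_\mu(\lambda + i0) = \lim_{t \downarrow 0} g_\mu(\lambda + it)$ is used (it exists for Lebesgue-almost every $\lambda$). -/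
open MeasureTheory Complex Filter Topology

/-!
Write `g = stieltjes μ`. In the upper half-plane `Im g > 0`, so `h = (-I g) ^ s` is holomorphic
there, with `‖h‖ = ‖g‖ ^ s ≤ (Im z) ^ (-s)`, and `|arg (-I g)| ≤ π / 2` gives
`Re h ≥ cos (s π / 2) ‖g‖ ^ s`. Cauchy's theorem on the rectangle `[a, b] × [η, η + 1]` bounds
`∫ₐᵇ h (x + η I) dx` by the top side, where `‖h‖ ≤ 1`, plus the two vertical sides, each at most
`∫_η^{η+1} y ^ (-s) dy ≤ 1 / (1 - s)`: this is where `s < 1` enters. The bound passes to the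
boundary values by Fatou's lemma.
-/

open Set
open scoped Real

section Fatou

variable {α ι : Type*} [MeasurableSpace α] {μ : Measure α} {l : Filter ι} [l.NeBot]
  [l.IsCountablyGenerated]

theorem integral_le_of_tendsto_ae_of_integral_le {f : ι → α → ℝ} {g : α → ℝ} {C : ℝ}
    (hf_nonneg : ∀ i x, 0 ≤ f i x) (hf_int : ∀ i, Integrable (f i) μ)
    (hf_le : ∀ i, ∫ x, f i x ∂μ ≤ C) (hlim : ∀ᵐ x ∂μ, Tendsto (fun i ↦ f i x) l (𝓝 (g x))) :
    ∫ x, g x ∂μ ≤ C := by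
  obtain ⟨i₀⟩ := l.nonempty_of_neBot
  have hC : 0 ≤ C := (integral_nonneg (hf_nonneg i₀)).trans (hf_le i₀)
  have hg_nonneg : 0 ≤ᵐ[μ] g := hlim.mono fun x hx ↦ ge_of_tendsto' hx fun i ↦ hf_nonneg i x
  rw [integral_eq_lintegral_of_nonneg_ae hg_nonneg
    (aestronglyMeasurable_of_tendsto_ae l (fun i ↦ (hf_int i).1) hlim)]
  refine ENNReal.toReal_le_of_le_ofReal hC ?_
  calc ∫⁻ x, ENNReal.ofReal (g x) ∂μ
      = ∫⁻ x, liminf (fun i ↦ ENNReal.ofReal (f i x)) l ∂μ :=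
        lintegral_congr_ae <| hlim.mono fun x hx ↦
          ((ENNReal.continuous_ofReal.tendsto _).comp hx).liminf_eq.symm
    _ ≤ liminf (fun i ↦ ∫⁻ x, ENNReal.ofReal (f i x) ∂μ) l :=
        lintegral_liminf_le' fun i ↦ (hf_int i).1.aemeasurable.ennreal_ofReal
    _ ≤ ENNReal.ofReal C := by
        refine liminf_le_of_frequently_le' (Frequently.of_forall fun i ↦ ?_)
        rw [← ofReal_integral_eq_lintegral_ofReal (hf_int i) (ae_of_all _ (hf_nonneg i))]
        exact ENNReal.ofReal_le_ofReal (hf_le i)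

end Fatou

theorem Real.cos_mul_pi_div_two_pos {s : ℝ} (hs₀ : -1 < s) (hs₁ : s < 1) :
    0 < Real.cos (s * (π / 2)) :=
  Real.cos_pos_of_mem_Ioo ⟨by nlinarith [Real.pi_pos], by nlinarith [Real.pi_pos]⟩

theorem Complex.cos_mul_pi_div_two_mul_norm_rpow_le_re_cpow {u : ℂ} (hu : 0 ≤ u.re) {s : ℝ}
    (hs₀ : 0 ≤ s) (hs₂ : s ≤ 2) : Real.cos (s * (π / 2)) * ‖u‖ ^ s ≤ (u ^ (s : ℂ)).re := by
  rw [cpow_ofReal_re, mul_comm]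
  refine mul_le_mul_of_nonneg_left ?_ (by positivity)
  have harg := abs_arg_le_pi_div_two_iff.2 hu
  rw [← Real.cos_abs (arg u * s), abs_mul, abs_of_nonneg hs₀]
  exact Real.cos_le_cos_of_nonneg_of_le_pi (by positivity) (by nlinarith [Real.pi_pos])
    (by nlinarith)

theorem integral_rpow_neg_le {s η : ℝ} (hs₀ : 0 ≤ s) (hs₁ : s < 1) (hη : 0 ≤ η) :
    ∫ y in η..η + 1, y ^ (-s) ≤ 1 / (1 - s) := by
  rw [integral_rpow (Or.inl (by linarith)), neg_add_eq_sub]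
  have hsubadd := Real.rpow_add_le_add_rpow hη zero_le_one (p := 1 - s) (by linarith) (by linarith)
  rw [Real.one_rpow] at hsubadd
  gcongr
  linarith

section UpperHalfPlane

variable {E : Type*} [NormedAddCommGroup E] [NormedSpace ℂ E] {f : ℂ → E} {s : ℝ}

theorem ContinuousOn.continuous_comp_horizontal {F : Type*} [TopologicalSpace F] {g : ℂ → F}
    (hg : ContinuousOn g {z | 0 < z.im}) {η : ℝ} (hη : 0 < η) :
    Continuous fun x : ℝ ↦ g (x + η * I) :=
  hg.comp_continuous (by fun_prop) fun x ↦ by simpa using hη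

theorem norm_integral_vertical_le_of_norm_le_rpow_im (hs₀ : 0 ≤ s) (hs₁ : s < 1)
    (hf : ∀ z : ℂ, 0 < z.im → ‖f z‖ ≤ z.im ^ (-s)) (d : ℝ) {η : ℝ} (hη : 0 < η) :
    ‖∫ y in η..η + 1, f (d + y * I)‖ ≤ 1 / (1 - s) := by
  refine (intervalIntegral.norm_integral_le_of_norm_le (by linarith) (ae_of_all _ fun y hy ↦ ?_)
    (intervalIntegral.intervalIntegrable_rpow' (by linarith))).trans
    (integral_rpow_neg_le hs₀ hs₁ hη.le)
  simpa using hf (d + y * I) (by simpa using hη.trans hy.1)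

theorem norm_integral_horizontal_le_of_norm_le_rpow_im [CompleteSpace E] (hs₀ : 0 ≤ s)
    (hs₁ : s < 1) (hf_diff : DifferentiableOn ℂ f {z | 0 < z.im})
    (hf : ∀ z : ℂ, 0 < z.im → ‖f z‖ ≤ z.im ^ (-s)) {a b η : ℝ} (hab : a ≤ b) (hη : 0 < η) :
    ‖∫ x in a..b, f (x + η * I)‖ ≤ b - a + 2 / (1 - s) := by
  have hsub : uIcc a b ×ℂ uIcc η (η + 1) ⊆ {z | 0 < z.im} := fun z hz ↦
    hη.trans_le (uIcc_of_le (by linarith : η ≤ η + 1) ▸ (mem_reProdIm.1 hz).2).1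
  have hrect := integral_boundary_rect_eq_zero_of_differentiableOn f ⟨a, η⟩ ⟨b, η + 1⟩
    (hf_diff.mono hsub)
  have hbottom : ∫ x in a..b, f (x + η * I) = (∫ x in a..b, f (x + ↑(η + 1) * I)) -
      I • (∫ y in η..η + 1, f (b + y * I)) + I • ∫ y in η..η + 1, f (a + y * I) := by
    rw [← sub_eq_zero, ← hrect]
    abel
  have htop : ‖∫ x in a..b, f (x + ↑(η + 1) * I)‖ ≤ b - a := by
    have hle : ∀ x : ℝ, ‖f (x + ↑(η + 1) * I)‖ ≤ 1 := fun x ↦ by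
      refine (hf _ (by simpa using (by linarith : 0 < η + 1))).trans ?_
      simpa using Real.rpow_le_one_of_one_le_of_nonpos (by linarith : 1 ≤ η + 1)
        (by linarith : -s ≤ 0)
    simpa [abs_of_nonneg (sub_nonneg.2 hab)] using
      intervalIntegral.norm_integral_le_of_norm_le_const (a := a) (b := b) fun x _ ↦ hle x
  rw [hbottom]
  calc ‖(∫ x in a..b, f (x + ↑(η + 1) * I)) - I • (∫ y in η..η + 1, f (b + y * I)) +
        I • ∫ y in η..η + 1, f (a + y * I)‖
      ≤ ‖∫ x in a..b, f (x + ↑(η + 1) * I)‖ + ‖∫ y in η..η + 1, f (b + y * I)‖ +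
        ‖∫ y in η..η + 1, f (a + y * I)‖ := by
        refine (norm_add_le _ _).trans ((add_le_add (norm_sub_le _ _) le_rfl).trans_eq ?_)
        simp only [norm_smul, norm_I, one_mul]
    _ ≤ b - a + 1 / (1 - s) + 1 / (1 - s) := by
        gcongr
        · exact norm_integral_vertical_le_of_norm_le_rpow_im hs₀ hs₁ hf b hη
        · exact norm_integral_vertical_le_of_norm_le_rpow_im hs₀ hs₁ hf a hη
    _ = b - a + 2 / (1 - s) := by ring

end UpperHalfPlane

section Stieltjes

variable {μ : Measure ℝ}

theorem stieltjes_eq_resolventTransform : stieltjes μ = resolventTransform μ := by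
  ext z
  simp [stieltjes, resolventTransform, resolvent, Ring.inverse_eq_inv']

theorem differentiableOn_stieltjes [IsFiniteMeasure μ] :
    DifferentiableOn ℂ (stieltjes μ) {z | 0 < z.im} := by
  rw [stieltjes_eq_resolventTransform]
  refine analyticOn_resolventTransform.differentiableOn.mono fun z hz ⟨x, _, hx⟩ ↦ ?_
  simp [← hx] at hz

theorem norm_inv_ofReal_sub_le {z : ℂ} (hz : 0 < z.im) (x : ℝ) :
    ‖((x : ℂ) - z)⁻¹‖ ≤ z.im⁻¹ := by
  rw [norm_inv]
  refine inv_anti₀ hz ((le_abs_self _).trans ?_)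
  simpa using abs_im_le_norm ((x : ℂ) - z)

theorem norm_stieltjes_le [IsProbabilityMeasure μ] {z : ℂ} (hz : 0 < z.im) :
    ‖stieltjes μ z‖ ≤ z.im⁻¹ := by
  simpa [stieltjes] using norm_integral_le_of_norm_le_const (μ := μ)
    (ae_of_all _ (norm_inv_ofReal_sub_le hz))

theorem im_stieltjes_pos [IsFiniteMeasure μ] [NeZero μ] {z : ℂ} (hz : 0 < z.im) :
    0 < (stieltjes μ z).im := by
  have hne : ∀ x : ℝ, (x : ℂ) - z ≠ 0 := fun x h ↦
    hz.ne' (by simpa using congrArg im (sub_eq_zero.1 h).symm)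
  have him : ∀ x : ℝ, 0 < (((x : ℂ) - z)⁻¹).im := fun x ↦ by
    rw [inv_im]
    have := normSq_pos.2 (hne x)
    simp only [sub_im, ofReal_im, zero_sub, neg_neg]
    positivity
  have hint : Integrable (fun x : ℝ ↦ ((x : ℂ) - z)⁻¹) μ :=
    Integrable.of_bound (by fun_prop) _ (ae_of_all _ (norm_inv_ofReal_sub_le hz))
  change 0 < RCLike.im (∫ x, ((x : ℂ) - z)⁻¹ ∂μ)
  rw [← integral_im hint]
  refine (integral_pos_iff_support_of_nonneg (fun x ↦ (him x).le) hint.im).2 ?_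
  rw [Function.support_eq_univ fun x ↦ (him x).ne']
  exact Measure.measure_univ_pos.2 (NeZero.ne μ)

theorem continuous_norm_stieltjes_rpow [IsFiniteMeasure μ] {s η : ℝ} (hs₀ : 0 ≤ s)
    (hη : 0 < η) : Continuous fun x : ℝ ↦ ‖stieltjes μ (x + η * I)‖ ^ s :=
  (differentiableOn_stieltjes.continuousOn.continuous_comp_horizontal hη).norm.rpow_const
    fun _ ↦ Or.inr hs₀

theorem setIntegral_norm_stieltjes_rpow_le [IsProbabilityMeasure μ] {s : ℝ}
    (hs₀ : 0 ≤ s) (hs₁ : s < 1) {a b η : ℝ} (hab : a ≤ b) (hη : 0 < η) :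
    ∫ l in Icc a b, ‖stieltjes μ (l + η * I)‖ ^ s ≤
      (Real.cos (s * (π / 2)))⁻¹ * (b - a + 2 / (1 - s)) := by
  have hre_pos : ∀ z : ℂ, 0 < z.im → 0 < (-I * stieltjes μ z).re := fun z hz ↦ by
    simpa using im_stieltjes_pos (μ := μ) hz
  have hdiff : DifferentiableOn ℂ (fun z ↦ (-I * stieltjes μ z) ^ (s : ℂ)) {z | 0 < z.im} :=
    (differentiableOn_stieltjes.const_mul _).cpow_const fun z hz ↦
      mem_slitPlane_iff.2 (Or.inl (hre_pos z hz))
  have hbound : ∀ z : ℂ, 0 < z.im → ‖(-I * stieltjes μ z) ^ (s : ℂ)‖ ≤ z.im ^ (-s) :=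
    fun z hz ↦ by
      rw [norm_cpow_real, norm_mul, norm_neg, norm_I, one_mul, Real.rpow_neg hz.le,
        ← Real.inv_rpow hz.le]
      exact Real.rpow_le_rpow (norm_nonneg _) (norm_stieltjes_le hz) hs₀
  have hcont : Continuous fun x : ℝ ↦ (-I * stieltjes μ (x + η * I)) ^ (s : ℂ) :=
    hdiff.continuousOn.continuous_comp_horizontal hη
  have hcos := Real.cos_mul_pi_div_two_pos (by linarith) hs₁
  rw [integral_Icc_eq_integral_Ioc, ← intervalIntegral.integral_of_le hab, le_inv_mul_iff₀ hcos,
    ← intervalIntegral.integral_const_mul]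
  calc ∫ x in a..b, Real.cos (s * (π / 2)) * ‖stieltjes μ (x + η * I)‖ ^ s
      ≤ ∫ x in a..b, ((-I * stieltjes μ (x + η * I)) ^ (s : ℂ)).re := by
        refine intervalIntegral.integral_mono_on hab ?_ ?_ fun x _ ↦ ?_
        · exact (continuous_const.mul
            (continuous_norm_stieltjes_rpow hs₀ hη)).intervalIntegrable _ _
        · exact (continuous_re.comp hcont).intervalIntegrable _ _
        · simpa using cos_mul_pi_div_two_mul_norm_rpow_le_re_cpow
            (hre_pos _ (by simpa using hη)).le hs₀ (by linarith)
    _ = (∫ x in a..b, (-I * stieltjes μ (x + η * I)) ^ (s : ℂ)).re :=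
        intervalIntegral.intervalIntegral_re (hcont.intervalIntegrable _ _)
    _ ≤ ‖∫ x in a..b, (-I * stieltjes μ (x + η * I)) ^ (s : ℂ)‖ := re_le_norm _
    _ ≤ b - a + 2 / (1 - s) :=
        norm_integral_horizontal_le_of_norm_le_rpow_im hs₀ hs₁ hdiff hbound hab hη

end Stieltjes

/-- Uniform `L^s`-bound (`0 < s < 1`) on an interval for Stieltjes transforms of
arbitrary probability measures, at any height `η > 0` and also for the a.e.
boundary values at `η = 0`. -/
theorem stieltjes_Ls_bound (s : ℝ) (hs0 : 0 < s) (hs1 : s < 1)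
    (a b : ℝ) (hab : a ≤ b) :
    ∃ C : ℝ, 0 < C ∧ ∀ (μ : Measure ℝ), IsProbabilityMeasure μ →
      (∀ η : ℝ, 0 < η →
        ∫ l in Set.Icc a b, ‖stieltjes μ (l + η * I)‖ ^ s ≤ C) ∧
      (∀ G : ℝ → ℂ,
        (∀ᵐ l : ℝ, l ∈ Set.Icc a b →
          Tendsto (fun t : ℝ => stieltjes μ (l + t * I)) (𝓝[>] 0) (𝓝 (G l))) →
        ∫ l in Set.Icc a b, ‖G l‖ ^ s ≤ C) := by
  have hC : 0 < (Real.cos (s * (π / 2)))⁻¹ * (b - a + 2 / (1 - s)) :=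
    mul_pos (inv_pos.2 (Real.cos_mul_pi_div_two_pos (by linarith) hs1))
      (add_pos_of_nonneg_of_pos (sub_nonneg.2 hab) (div_pos two_pos (sub_pos.2 hs1)))
  refine ⟨_, hC, fun μ _ ↦ ⟨fun η hη ↦ setIntegral_norm_stieltjes_rpow_le hs0.le hs1 hab hη,
    fun G hG ↦ ?_⟩⟩
  have ht : Tendsto (fun n : ℕ ↦ ((n : ℝ) + 1)⁻¹) atTop (𝓝[>] 0) :=
    tendsto_inv_atTop_nhdsGT_zero.comp (tendsto_natCast_atTop_atTop.atTop_add tendsto_const_nhds)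
  refine integral_le_of_tendsto_ae_of_integral_le (l := atTop)
    (f := fun (n : ℕ) (l : ℝ) ↦ ‖stieltjes μ (l + (((n : ℝ) + 1)⁻¹ : ℝ) * I)‖ ^ s)
    (fun n l ↦ by positivity)
    (fun n ↦ (continuous_norm_stieltjes_rpow hs0.le (by positivity)).integrableOn_Icc)
    (fun n ↦ setIntegral_norm_stieltjes_rpow_le hs0.le hs1 hab (by positivity)) ?_
  filter_upwards [(ae_restrict_iff' measurableSet_Icc).2 hG] with l hl
  exact ((continuous_norm.rpow_const fun _ ↦ Or.inr hs0.le).tendsto _).comp (hl.comp ht)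
end

section
/- Let $A$ be a real symmetric $n \times n$ matrix with orthonormal eigenbasis $\psi_1, \dots, \psi_n$ and eigenvalues $\lambda_1, \dots, \lambda_n$, and let $R(z) = (A - zI)^{-1}$ for $\operatorname{Im}(z) > 0$. Fix an index $o$ and suppose that for some $\lambda \in \mathbb{R}$, $a, b, \eta > 0$: $\operatorname{Im} R_{oo}(\lambda + i\eta) \geq a$ and $\operatorname{Im} R_{oo}(\lambda + iy) \leq b$ for all $y \geq \eta$. Then for $I = [\lambda - s/2, \lambda + s/2]$ with $s \geq 2\eta$: $\sum_{k : \lambda_k \in I} |\psi_k(o)|^2 \leq b s$, and if additionally $s/\eta \geq 8b/a$ then $\sum_{k: \lambda_k \in I} |\psi_k(o)|^2 \geq \frac{a \eta}{2}$. -/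
open MeasureTheory Complex Matrix

private lemma col_orth {n : ℕ} (ψ : Fin n → Fin n → ℝ)
    (horth : ∀ k l : Fin n, ∑ i, ψ k i * ψ l i = if k = l then (1 : ℝ) else 0)
    (i j : Fin n) : ∑ k, ψ k i * ψ k j = if i = j then (1:ℝ) else 0 := by
  have h1 : (Matrix.of ψ) * (Matrix.of ψ)ᵀ = 1 := by
    ext k l
    simpa [Matrix.mul_apply, Matrix.one_apply] using horth k l
  have h2 : (Matrix.of ψ)ᵀ * (Matrix.of ψ) = 1 := mul_eq_one_comm.mp h1
  have h3 := congrFun (congrFun h2 i) j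
  simpa [Matrix.mul_apply, Matrix.one_apply, mul_comm] using h3

private lemma res_entry {n : ℕ} (A : Matrix (Fin n) (Fin n) ℝ)
    (ψ : Fin n → Fin n → ℝ) (ev : Fin n → ℝ)
    (heig : ∀ k, A.mulVec (ψ k) = ev k • ψ k)
    (horth : ∀ k l : Fin n, ∑ i, ψ k i * ψ l i = if k = l then (1 : ℝ) else 0)
    (z : ℂ) (hz : 0 < z.im) (o : Fin n) :
    ((A.map (fun x : ℝ => (x : ℂ)) - z • (1 : Matrix (Fin n) (Fin n) ℂ))⁻¹) o o
      = ∑ k, ((ψ k o : ℂ))^2 / ((ev k : ℂ) - z) := by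
  have hne : ∀ k, ((ev k : ℂ) - z) ≠ 0 := by
    intro k h
    have h' := congrArg Complex.im h
    simp at h'
    linarith
  have hAψ : ∀ k i, ∑ l, A i l * ψ k l = ev k * ψ k i := by
    intro k i
    have := congrFun (heig k) i
    simpa [Matrix.mulVec, dotProduct] using this
  set B : Matrix (Fin n) (Fin n) ℂ :=
    Matrix.of (fun i j => ∑ k, (ψ k i : ℂ) * (ψ k j : ℂ) / ((ev k : ℂ) - z)) with hB
  have hMB : (A.map (fun x : ℝ => (x : ℂ)) - z • (1 : Matrix (Fin n) (Fin n) ℂ)) * B = 1 := by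
    ext i j
    simp only [Matrix.mul_apply, hB, Matrix.of_apply, Matrix.sub_apply, Matrix.map_apply,
      Matrix.smul_apply, Matrix.one_apply, smul_eq_mul, Matrix.one_apply]
    have e1 : ∀ l, ((A i l : ℂ) - z * (if i = l then 1 else 0)) *
        (∑ k, (ψ k l : ℂ) * (ψ k j : ℂ) / ((ev k : ℂ) - z))
        = ∑ k, (((A i l : ℂ) - z * (if i = l then 1 else 0)) * (ψ k l : ℂ)) *
            ((ψ k j : ℂ) / ((ev k : ℂ) - z)) := by
      intro l
      rw [Finset.mul_sum]
      exact Finset.sum_congr rfl fun k _ => by ring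
    rw [Finset.sum_congr rfl fun l _ => e1 l, Finset.sum_comm]
    have e2 : ∀ k, ∑ l, (((A i l : ℂ) - z * (if i = l then 1 else 0)) * (ψ k l : ℂ)) *
        ((ψ k j : ℂ) / ((ev k : ℂ) - z)) = (ψ k i : ℂ) * (ψ k j : ℂ) := by
      intro k
      rw [← Finset.sum_mul]
      have hsum : ∑ l, (((A i l : ℂ) - z * (if i = l then 1 else 0)) * (ψ k l : ℂ))
          = ((ev k : ℂ) - z) * (ψ k i : ℂ) := by
        have c1 : ∑ l, ((A i l : ℂ) * (ψ k l : ℂ)) = ((ev k : ℂ)) * (ψ k i : ℂ) := by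
          have := hAψ k i
          exact_mod_cast congrArg (fun r : ℝ => (r : ℂ)) this
        have c2 : ∑ l, (z * (if i = l then 1 else 0) * (ψ k l : ℂ)) = z * (ψ k i : ℂ) := by
          simp [ite_mul, mul_ite]
        calc ∑ l, (((A i l : ℂ) - z * (if i = l then 1 else 0)) * (ψ k l : ℂ))
            = ∑ l, (((A i l : ℂ) * (ψ k l : ℂ)) - z * (if i = l then 1 else 0) * (ψ k l : ℂ)) := by
              exact Finset.sum_congr rfl fun l _ => by ring
          _ = ((ev k : ℂ)) * (ψ k i : ℂ) - z * (ψ k i : ℂ) := by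
              rw [Finset.sum_sub_distrib, c1, c2]
          _ = ((ev k : ℂ) - z) * (ψ k i : ℂ) := by ring
      rw [hsum]
      field_simp [hne k]
    rw [Finset.sum_congr rfl fun k _ => e2 k]
    have hco := col_orth ψ horth i j
    calc ∑ k, (ψ k i : ℂ) * (ψ k j : ℂ) = ((∑ k, ψ k i * ψ k j : ℝ) : ℂ) := by push_cast; rfl
      _ = if i = j then 1 else 0 := by rw [hco]; split <;> simp
  rw [Matrix.inv_eq_right_inv hMB]
  simp only [hB, Matrix.of_apply]
  exact Finset.sum_congr rfl fun k _ => by rw [sq]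

/-- Eigenvector mass bounds from the resolvent: if `Im R_oo(λ + iη) ≥ a` and
`Im R_oo(λ + iy) ≤ b` for all `y ≥ η`, then for `I = [λ - s/2, λ + s/2]` with
`s ≥ 2η` the eigenvector mass `∑_{k : λₖ ∈ I} ψₖ(o)²` is at most `b s`, and at
least `a s / (2 (s/η))` provided `s/η ≥ 8b/a`. -/
theorem eigenvector_mass_bounds (n : ℕ) (A : Matrix (Fin n) (Fin n) ℝ) (hA : A.IsSymm)
    (ψ : Fin n → Fin n → ℝ) (ev : Fin n → ℝ)
    (heig : ∀ k, A.mulVec (ψ k) = ev k • ψ k)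
    (horth : ∀ k l : Fin n, ∑ i, ψ k i * ψ l i = if k = l then (1 : ℝ) else 0)
    (o : Fin n) (lam a b η : ℝ) (ha : 0 < a) (hb : 0 < b) (hη : 0 < η)
    (R : ℂ → Matrix (Fin n) (Fin n) ℂ)
    (hR : ∀ z : ℂ, 0 < z.im →
      R z = (A.map (fun x : ℝ => (x : ℂ)) - z • (1 : Matrix (Fin n) (Fin n) ℂ))⁻¹)
    (hlow : a ≤ (R (lam + η * I) o o).im)
    (hup : ∀ y ≥ η, (R (lam + y * I) o o).im ≤ b)
    (s : ℝ) (hs : 2 * η ≤ s) :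
    (∑ k, (if ev k ∈ Set.Icc (lam - s / 2) (lam + s / 2) then (ψ k o) ^ 2 else 0)) ≤ b * s ∧
      (s / η ≥ 8 * b / a →
        a * s / (2 * (s / η)) ≤
          ∑ k, (if ev k ∈ Set.Icc (lam - s / 2) (lam + s / 2) then (ψ k o) ^ 2 else 0)) := by
  have hs0 : 0 < s := lt_of_lt_of_le (by linarith) hs
  -- imaginary-part formula
  have him : ∀ y : ℝ, 0 < y → (R (lam + y * I) o o).im
      = ∑ k, (ψ k o)^2 * (y / ((ev k - lam)^2 + y^2)) := by
    intro y hy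
    have hzim : (0:ℝ) < ((lam : ℂ) + y * I).im := by simp [hy]
    rw [hR _ hzim, res_entry A ψ ev heig horth _ hzim o, Complex.im_sum]
    refine Finset.sum_congr rfl fun k _ => ?_
    rw [Complex.div_im]
    simp [Complex.normSq_apply, ← Complex.ofReal_pow]
    ring
  set S : ℝ := ∑ k, (if ev k ∈ Set.Icc (lam - s / 2) (lam + s / 2) then (ψ k o) ^ 2 else 0)
    with hSdef
  have hdenpos : ∀ (k : Fin n) (y : ℝ), 0 < y → 0 < (ev k - lam)^2 + y^2 := by
    intro k y hy; positivity
  have hsq : ∀ k, ev k ∈ Set.Icc (lam - s / 2) (lam + s / 2) → (ev k - lam)^2 ≤ (s/2)^2 := by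
    intro k hk
    obtain ⟨h1, h2⟩ := hk
    have : |ev k - lam| ≤ s/2 := abs_le.mpr ⟨by linarith, by linarith⟩
    calc (ev k - lam)^2 = |ev k - lam|^2 := (_root_.sq_abs _).symm
      _ ≤ (s/2)^2 := by
          apply pow_le_pow_left₀ (abs_nonneg _) this
  have hsq' : ∀ k, ev k ∉ Set.Icc (lam - s / 2) (lam + s / 2) → (s/2)^2 ≤ (ev k - lam)^2 := by
    intro k hk
    have : s/2 ≤ |ev k - lam| := by
      rw [Set.mem_Icc, not_and_or] at hk
      rcases hk with h | h
      · push_neg at h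
        rw [abs_sub_comm]
        calc s/2 ≤ lam - ev k := by linarith
          _ ≤ |lam - ev k| := le_abs_self _
      · push_neg at h
        calc s/2 ≤ ev k - lam := by linarith
          _ ≤ |ev k - lam| := le_abs_self _
    calc (s/2)^2 ≤ |ev k - lam|^2 := by
          apply pow_le_pow_left₀ (by linarith) this
      _ = (ev k - lam)^2 := _root_.sq_abs _
  have hhalf : η ≤ s/2 := by linarith
  have hub := hup (s/2) hhalf
  rw [him (s/2) (by linarith)] at hub
  -- Upper bound
  have hupper : S ≤ b * s := by
    have h1 : S * (1/s) ≤ ∑ k, (ψ k o)^2 * ((s/2) / ((ev k - lam)^2 + (s/2)^2)) := by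
      rw [hSdef, Finset.sum_mul]
      refine Finset.sum_le_sum fun k _ => ?_
      by_cases hk : ev k ∈ Set.Icc (lam - s / 2) (lam + s / 2)
      · rw [if_pos hk]
        have hd := hdenpos k (s/2) (by linarith)
        have hle : (ev k - lam)^2 + (s/2)^2 ≤ s^2/2 := by
          have := hsq k hk; nlinarith
        have : 1/s ≤ (s/2) / ((ev k - lam)^2 + (s/2)^2) := by
          rw [div_le_div_iff₀ hs0 hd]
          nlinarith
        exact mul_le_mul_of_nonneg_left this (by positivity)
      · rw [if_neg hk]
        have hd := hdenpos k (s/2) (by linarith)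
        simp only [zero_mul]
        positivity
    have := le_trans h1 hub
    calc S = S * (1/s) * s := by field_simp
      _ ≤ b * s := mul_le_mul_of_nonneg_right this (le_of_lt hs0)
  rw [hSdef] at hupper
  refine ⟨hupper, fun hc => ?_⟩
  -- Lower bound
  have hlow' := hlow
  rw [him η hη] at hlow'
  have hsplit : ∑ k, (ψ k o)^2 * (η / ((ev k - lam)^2 + η^2))
      = (∑ k, if ev k ∈ Set.Icc (lam - s / 2) (lam + s / 2) then
          (ψ k o)^2 * (η / ((ev k - lam)^2 + η^2)) else 0)
      + (∑ k, if ev k ∈ Set.Icc (lam - s / 2) (lam + s / 2) then 0 else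
          (ψ k o)^2 * (η / ((ev k - lam)^2 + η^2))) := by
    rw [← Finset.sum_add_distrib]
    refine Finset.sum_congr rfl fun k _ => ?_
    split <;> simp
  have hin : (∑ k, if ev k ∈ Set.Icc (lam - s / 2) (lam + s / 2) then
      (ψ k o)^2 * (η / ((ev k - lam)^2 + η^2)) else 0) ≤ S * (1/η) := by
    rw [hSdef, Finset.sum_mul]
    refine Finset.sum_le_sum fun k _ => ?_
    by_cases hk : ev k ∈ Set.Icc (lam - s / 2) (lam + s / 2)
    · rw [if_pos hk, if_pos hk]
      have hd := hdenpos k η hη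
      have : η / ((ev k - lam)^2 + η^2) ≤ 1/η := by
        rw [div_le_div_iff₀ hd hη]
        nlinarith
      exact mul_le_mul_of_nonneg_left this (by positivity)
    · rw [if_neg hk, if_neg hk, zero_mul]
  have hout : (∑ k, if ev k ∈ Set.Icc (lam - s / 2) (lam + s / 2) then 0 else
      (ψ k o)^2 * (η / ((ev k - lam)^2 + η^2)))
      ≤ (4*η/s) * ∑ k, (ψ k o)^2 * ((s/2) / ((ev k - lam)^2 + (s/2)^2)) := by
    rw [Finset.mul_sum]
    refine Finset.sum_le_sum fun k _ => ?_
    have hd := hdenpos k (s/2) (by linarith)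
    by_cases hk : ev k ∈ Set.Icc (lam - s / 2) (lam + s / 2)
    · rw [if_pos hk]; positivity
    · rw [if_neg hk]
      have hdη := hdenpos k η hη
      have hx := hsq' k hk
      have key : η / ((ev k - lam)^2 + η^2) ≤ (4*η/s) * ((s/2) / ((ev k - lam)^2 + (s/2)^2)) := by
        rw [mul_div_assoc', div_le_div_iff₀ hdη (by positivity)]
        have h4 : 4*η/s*(s/2) = 2*η := by field_simp; ring
        rw [h4]
        nlinarith [mul_le_mul_of_nonneg_left hx (le_of_lt hη), sq_nonneg η]
      calc (ψ k o)^2 * (η / ((ev k - lam)^2 + η^2))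
          ≤ (ψ k o)^2 * ((4*η/s) * ((s/2) / ((ev k - lam)^2 + (s/2)^2))) :=
            mul_le_mul_of_nonneg_left key (by positivity)
        _ = (4*η/s) * ((ψ k o)^2 * ((s/2) / ((ev k - lam)^2 + (s/2)^2))) := by ring
  have houtb : (∑ k, if ev k ∈ Set.Icc (lam - s / 2) (lam + s / 2) then 0 else
      (ψ k o)^2 * (η / ((ev k - lam)^2 + η^2))) ≤ a/2 := by
    have h2 : (4*η/s) * (∑ k, (ψ k o)^2 * ((s/2) / ((ev k - lam)^2 + (s/2)^2))) ≤ (4*η/s) * b :=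
      mul_le_mul_of_nonneg_left hub (by positivity)
    have h3 : (4*η/s) * b ≤ a/2 := by
      have hsη : 8*b/a ≤ s/η := hc
      have : 8*b*η ≤ a*s := by
        rw [div_le_div_iff₀ ha hη] at hsη
        linarith
      rw [div_mul_eq_mul_div, div_le_div_iff₀ hs0 (by norm_num : (0:ℝ) < 2)]
      nlinarith
    linarith [le_trans (hout) h2]
  have hfinal : a ≤ S * (1/η) + a/2 := by
    rw [hsplit] at hlow'
    linarith
  have hS : a * η / 2 ≤ S := by
    have : a/2 ≤ S * (1/η) := by linarith
    have := mul_le_mul_of_nonneg_right this (le_of_lt hη)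
    rw [mul_assoc, one_div, inv_mul_cancel₀ (ne_of_gt hη), mul_one] at this
    linarith
  have heq : a * s / (2 * (s / η)) = a * η / 2 := by
    field_simp
  rw [hSdef] at hS
  rw [heq]
  exact hS
end
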